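/- arXiv:1606.07042 — 3 statements merged into one kernel-verified Lean document; each statement's English description precedes it below -/
import Mathlib

section
/- Let A, A', B, Z₁, Z₂, c be real numbers with c ≥ 0, A > B, A ≥ A', and Z₁ ≤ Z₂, and let p_el ∈ [0,1] satisfy p_el·A' + (1−p_el)·(Z₁ − Z₂) − c = p_el·B. Then p_el·A − c ≥ p_el·B, and consequently p_el ≥ c/(A−B) = p_ds. -/
/-- If the `g^l` equilibrium exists when `c = 0` and `p = 0` (encoded by `Z₁ ≤ Z₂`),
and `p_el` is the spot-check probability eliminating the `g^l` equilibrium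
(equalizing the deviator's utility `p·A' + (1−p)·Z₁ − c` with the equilibrium
utility `p·B + (1−p)·Z₂`), then `p_el·A − c ≥ p_el·B`, and hence
`p_el ≥ c/(A−B) = p_ds`. -/
theorem p_el_ge_p_ds
    (A A' B Z₁ Z₂ c : ℝ) (hc : 0 ≤ c) (hAB : A > B) (hA' : A ≥ A') (hZ : Z₁ ≤ Z₂)
    (p_el : ℝ) (hp0 : 0 ≤ p_el) (hp1 : p_el ≤ 1)
    (heq : p_el * A' + (1 - p_el) * (Z₁ - Z₂) - c = p_el * B) :
    p_el * A - c ≥ p_el * B ∧ p_el ≥ c / (A - B) := by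
  have h1 : p_el * A' ≤ p_el * A := mul_le_mul_of_nonneg_left hA' hp0
  have h2 : (1 - p_el) * (Z₁ - Z₂) ≤ 0 :=
    mul_nonpos_of_nonneg_of_nonpos (by linarith) (by linarith)
  have hmain : p_el * A - c ≥ p_el * B := by linarith
  refine ⟨hmain, ?_⟩
  rw [ge_iff_le, div_le_iff₀ (by linarith)]
  nlinarith
end

section
/- Let A, A', B, Z₁, Z_t, Z₂, c be real numbers with c ≥ 0, A > B, A ≥ A', Z₁ ≤ Z₂, and Z_t ≤ Z₂. Let p_el ∈ [0,1] satisfy p_el·A' + (1−p_el)·(Z₁ − Z₂) − c = p_el·B, let p_ex ∈ [0,1] satisfy p_ex·A + (1−p_ex)·(Z_t − Z₂) − c = p_ex·B, and let p_Pareto be a real number with p_Pareto ≥ min(p_el, p_ex). Then p_Pareto ≥ c/(A−B) = p_ds. -/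
/-- Sufficient condition for the Pareto comparison: if the `g^l` equilibrium exists
(`Z₁ ≤ Z₂`) and Pareto dominates the truthful equilibrium (`Z_t ≤ Z₂`) when `c = 0`
and `p = 0`, then the minimum spot-check probability `p_Pareto` at which the truthful
equilibrium is Pareto dominant (which is at least `min(p_el, p_ex)`) satisfies
`p_Pareto ≥ c/(A−B) = p_ds`. -/
theorem p_pareto_ge_p_ds
    (A A' B Z₁ Zt Z₂ c : ℝ) (hc : 0 ≤ c) (hAB : A > B) (hA' : A ≥ A')
    (hZ₁ : Z₁ ≤ Z₂) (hZt : Zt ≤ Z₂)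
    (p_el : ℝ) (hel0 : 0 ≤ p_el) (hel1 : p_el ≤ 1)
    (heqel : p_el * A' + (1 - p_el) * (Z₁ - Z₂) - c = p_el * B)
    (p_ex : ℝ) (hex0 : 0 ≤ p_ex) (hex1 : p_ex ≤ 1)
    (heqex : p_ex * A + (1 - p_ex) * (Zt - Z₂) - c = p_ex * B)
    (p_Pareto : ℝ) (hP : p_Pareto ≥ min p_el p_ex) :
    p_Pareto ≥ c / (A - B) := by
  have hAB' : 0 < A - B := by linarith
  have h1 : c / (A - B) ≤ p_el := by
    rw [div_le_iff₀ hAB']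
    nlinarith [mul_le_mul_of_nonneg_left hA' hel0]
  have h2 : c / (A - B) ≤ p_ex := by
    rw [div_le_iff₀ hAB']
    nlinarith
  calc c / (A - B) ≤ min p_el p_ex := le_min h1 h2
    _ ≤ p_Pareto := hP
end

section
/- Let Q be a finite nonempty type and let μ be a probability mass function on Q × Q with first marginal P(s) = Σ_{s' ∈ Q} μ(s, s'). If there exists s₀ ∈ Q with μ(s₀, s₀) < P(s₀), then Σ_{s ∈ Q} μ(s, s) − Σ_{s ∈ Q} P(s)² < 1 − 1/|Q|. -/
/-- If `μ` is a joint probability mass function on `Q × Q` with first marginal `P`,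
and the high-quality signal is noisy (`μ(s₀, s₀) < P(s₀)` for some `s₀`), then the
truthful-equilibrium utility `Σ_s μ(s,s) − Σ_s P(s)²` of the Dasgupta–Ghosh/Shnayder
et al. mechanism is strictly less than the low-quality-signal equilibrium utility
`1 − 1/|Q|`. -/
theorem dg_truthful_lt_low_quality
    {Q : Type*} [Fintype Q] [Nonempty Q]
    (μ : Q × Q → ℝ) (hμ0 : ∀ z, 0 ≤ μ z) (hμ1 : ∑ z : Q × Q, μ z = 1)
    (P : Q → ℝ) (hP : ∀ s, P s = ∑ s', μ (s, s'))
    (hnoisy : ∃ s₀ : Q, μ (s₀, s₀) < P s₀) :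
    (∑ s, μ (s, s)) - (∑ s, (P s) ^ 2) < 1 - 1 / Fintype.card Q := by
  obtain ⟨s₀, hs₀⟩ := hnoisy
  have hPsum : ∑ s, P s = 1 := by
    simp_rw [hP]
    rw [← Fintype.sum_prod_type]
    exact hμ1
  have hdiag : ∑ s, μ (s, s) < 1 := by
    rw [← hPsum]
    apply Finset.sum_lt_sum (fun s _ => ?_) ⟨s₀, Finset.mem_univ _, hs₀⟩
    rw [hP]
    exact Finset.single_le_sum (fun s' _ => hμ0 (s, s')) (Finset.mem_univ s)
  have hcard : (0:ℝ) < Fintype.card Q := by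
    exact_mod_cast Fintype.card_pos
  have hCS : (1:ℝ) ≤ Fintype.card Q * ∑ s, (P s) ^ 2 := by
    have := sq_sum_le_card_mul_sum_sq (s := (Finset.univ : Finset Q)) (f := P)
    simpa [hPsum] using this
  have h2 : 1 / (Fintype.card Q : ℝ) ≤ ∑ s, (P s) ^ 2 := by
    rw [div_le_iff₀ hcard]
    linarith [hCS]
  linarith
end
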